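/- arXiv:2208.01079 — 2 statements merged into one kernel-verified Lean document; each statement's English description precedes it below -/
import Mathlib

section
/- Let M ∈ ℝ^{m×m} and N ∈ ℝ^{n×n} be symmetric positive definite, A ∈ ℝ^{m×n}, and b ∈ ℝⁿ nonzero with β₁ := √(bᵀ N⁻¹ b) and q₁ := N⁻¹ b/β₁. Suppose V ∈ ℝ^{m×n} and Q ∈ ℝ^{n×n} satisfy the complete bidiagonalization relations A Q = M V B, Aᵀ V = N Q Bᵀ, Vᵀ M V = I_n, Qᵀ N Q = I_n, where B is an invertible n×n matrix and the first column of Q is q₁. Then u := V z and p := Q y with z := β₁ B⁻ᵀ e₁ and y := −B⁻¹ z solve the saddle-point system: M u + A p = 0 and Aᵀ u = b. -/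
/-!
Both equations come from cancelling `B` in one bidiagonalization relation: `A Q B⁻¹ = M V`
turns `A p = -A Q B⁻¹ z` into `-M V z = -M u`, and `Aᵀ V B⁻ᵀ = N Q` turns
`Aᵀ u = β₁ Aᵀ V B⁻ᵀ e₁` into `β₁ N Q e₁ = β₁ N q₁ = b`.
-/

open Matrix

theorem mulVec_mulVec_inv_mulVec_of_mul_eq {R l m n k : Type*} [CommRing R] [Fintype m]
    [Fintype n] [Fintype k] [DecidableEq n] {X : Matrix l m R} {Y : Matrix m n R}
    {Z : Matrix l k R} {W : Matrix k n R} {B : Matrix n n R} (hB : IsUnit B.det)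
    (h : X * Y = Z * W * B) (v : n → R) :
    X *ᵥ (Y *ᵥ (B⁻¹ *ᵥ v)) = Z *ᵥ (W *ᵥ v) := by
  have hcancel : X * Y * B⁻¹ = Z * W := by
    rw [h, Matrix.mul_assoc, mul_nonsing_inv _ hB, Matrix.mul_one]
  rw [mulVec_mulVec, mulVec_mulVec, hcancel, ← mulVec_mulVec]

theorem smul_mulVec_eq_of_eq_inv_smul_inv_mulVec {K n : Type*} [Field K] [Fintype n]
    [DecidableEq n] {N : Matrix n n K} (hN : IsUnit N.det) {β : K} (hβ : β ≠ 0) {b q : n → K}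
    (hq : q = β⁻¹ • (N⁻¹ *ᵥ b)) :
    β • (N *ᵥ q) = b := by
  rw [hq, mulVec_smul, mulVec_mulVec, mul_nonsing_inv _ hN, one_mulVec, smul_smul,
    mul_inv_cancel₀ hβ, one_smul]

theorem Matrix.PosDef.sqrt_dotProduct_inv_mulVec_pos {n : Type*} [Fintype n] [DecidableEq n]
    {N : Matrix n n ℝ} (hN : N.PosDef) {b : n → ℝ} (hb : b ≠ 0) :
    0 < Real.sqrt (b ⬝ᵥ N⁻¹ *ᵥ b) := by
  simpa using hN.inv.dotProduct_mulVec_pos hb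

theorem stmt7_general {m n : ℕ} [NeZero n] (M : Matrix (Fin m) (Fin m) ℝ)
    (N : Matrix (Fin n) (Fin n) ℝ) (A : Matrix (Fin m) (Fin n) ℝ)
    (hN : N.PosDef)
    (b : Fin n → ℝ) (hb : b ≠ 0)
    (β₁ : ℝ) (hβ : β₁ = Real.sqrt (b ⬝ᵥ N⁻¹ *ᵥ b))
    (q₁ : Fin n → ℝ) (hq : q₁ = β₁⁻¹ • (N⁻¹ *ᵥ b))
    (V : Matrix (Fin m) (Fin n) ℝ) (Q B : Matrix (Fin n) (Fin n) ℝ)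
    (hB : IsUnit B.det)
    (h1 : A * Q = M * V * B) (h2 : Aᵀ * V = N * Q * Bᵀ)
    (hcol : ∀ i, Q i 0 = q₁ i)
    (z y : Fin n → ℝ)
    (hz : z = β₁ • (Bᵀ)⁻¹ *ᵥ (Pi.single (0 : Fin n) (1 : ℝ) : Fin n → ℝ))
    (hy : y = -(B⁻¹ *ᵥ z)) :
    M *ᵥ (V *ᵥ z) + A *ᵥ (Q *ᵥ y) = 0 ∧ Aᵀ *ᵥ (V *ᵥ z) = b := by
  refine ⟨?_, ?_⟩
  · rw [hy, mulVec_neg, mulVec_neg, mulVec_mulVec_inv_mulVec_of_mul_eq hB h1, add_neg_cancel]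
  · have hβ₁ : β₁ ≠ 0 := (hβ ▸ hN.sqrt_dotProduct_inv_mulVec_pos hb).ne'
    have hBT : IsUnit Bᵀ.det := by rwa [det_transpose]
    have hQe : Q *ᵥ Pi.single 0 1 = q₁ := by
      rw [mulVec_single_one]
      exact funext hcol
    calc Aᵀ *ᵥ (V *ᵥ z) = β₁ • (N *ᵥ (Q *ᵥ Pi.single 0 1)) := by
          rw [hz, mulVec_smul, mulVec_smul, mulVec_mulVec_inv_mulVec_of_mul_eq hBT h2]
      _ = b := by
          rw [hQe]
          exact smul_mulVec_eq_of_eq_inv_smul_inv_mulVec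
            ((isUnit_iff_isUnit_det N).mp hN.isUnit) hβ₁ hq

/-- After a complete bidiagonalization `A Q = M V B`, `Aᵀ V = N Q Bᵀ` with
`M`-orthonormal `V`, `N`-orthonormal `Q` (first column `q₁ = N⁻¹b/β₁`), the vectors
`u = V z`, `p = Q y` with `z = β₁ B⁻ᵀ e₁`, `y = −B⁻¹ z` solve the saddle-point system
`M u + A p = 0`, `Aᵀ u = b`. -/
theorem stmt7 {m n : ℕ} [NeZero n] (M : Matrix (Fin m) (Fin m) ℝ)
    (N : Matrix (Fin n) (Fin n) ℝ) (A : Matrix (Fin m) (Fin n) ℝ)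
    (hM : M.PosDef) (hN : N.PosDef)
    (b : Fin n → ℝ) (hb : b ≠ 0)
    (β₁ : ℝ) (hβ : β₁ = Real.sqrt (b ⬝ᵥ N⁻¹ *ᵥ b))
    (q₁ : Fin n → ℝ) (hq : q₁ = β₁⁻¹ • (N⁻¹ *ᵥ b))
    (V : Matrix (Fin m) (Fin n) ℝ) (Q B : Matrix (Fin n) (Fin n) ℝ)
    (hB : IsUnit B.det)
    (h1 : A * Q = M * V * B) (h2 : Aᵀ * V = N * Q * Bᵀ)
    (h3 : Vᵀ * M * V = 1) (h4 : Qᵀ * N * Q = 1)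
    (hcol : ∀ i, Q i 0 = q₁ i)
    (z y : Fin n → ℝ)
    (hz : z = β₁ • (Bᵀ)⁻¹ *ᵥ (Pi.single (0 : Fin n) (1 : ℝ) : Fin n → ℝ))
    (hy : y = -(B⁻¹ *ᵥ z)) :
    M *ᵥ (V *ᵥ z) + A *ᵥ (Q *ᵥ y) = 0 ∧ Aᵀ *ᵥ (V *ᵥ z) = b :=
  stmt7_general M N A hN b hb β₁ hβ q₁ hq V Q B hB h1 h2 hcol z y hz hy
end

section
/- Let N ∈ ℝ^{n×n} be symmetric positive definite, A ∈ ℝ^{m×n}, and b ∈ ℝⁿ nonzero with β₁ := √(bᵀ N⁻¹ b) and q₁ := N⁻¹ b/β₁. Suppose after k < n steps the partial bidiagonalization relations hold: Aᵀ V_k = N Q_k B_kᵀ + β_{k+1} N q_{k+1} e_kᵀ, where Q_k ∈ ℝ^{n×k} is N-orthonormal with first column q₁, V_k ∈ ℝ^{m×k}, B_k is the k×k upper bidiagonal matrix with nonzero diagonal α₁,…,α_k and superdiagonal β₂,…,β_k, q_{k+1} ∈ ℝⁿ satisfies q_{k+1}ᵀ N q_{k+1} = 1, and e_k is the k-th standard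 basis vector. Then for z_k := β₁ B_k⁻ᵀ e₁ with last entry ζ_k and u_k := V_k z_k, the constraint residual satisfies Aᵀ u_k − b = ζ_k β_{k+1} N q_{k+1}, and hence its N⁻¹-norm equals |ζ_k| β_{k+1}. -/
/-!
Applying the relation `Aᵀ V_k = N Q_k B_kᵀ + β_{k+1} N q_{k+1} e_kᵀ` to `z_k` gives
`Aᵀ u_k = N Q_k (B_kᵀ z_k) + ζ_k β_{k+1} N q_{k+1}`. By the choice of `z_k`,
`B_kᵀ z_k = β₁ e₁`, so the first term is `β₁ N q₁ = b`. The `N⁻¹`-norm of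
`c N q_{k+1}` is `|c| ‖q_{k+1}‖_N = |c|`.
-/

open Matrix

namespace Matrix

section Bidiagonal

variable {R : Type*} [CommRing R] {k : ℕ}

def upperBidiagonal (α β : Fin k → R) : Matrix (Fin k) (Fin k) R :=
  of fun i j => if j = i then α i else if (j : ℕ) = (i : ℕ) + 1 then β j else 0

theorem isUpperTriangular_upperBidiagonal (α β : Fin k → R) :
    (upperBidiagonal α β).IsUpperTriangular := by
  intro i j hij
  have hji : j < i := hij
  simp only [upperBidiagonal, of_apply, if_neg hji.ne, if_neg (show (j : ℕ) ≠ i + 1 by omega)]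

theorem det_upperBidiagonal (α β : Fin k → R) : (upperBidiagonal α β).det = ∏ i, α i := by
  rw [det_of_isUpperTriangular (isUpperTriangular_upperBidiagonal α β)]
  simp [upperBidiagonal]

theorem isUnit_det_upperBidiagonal {α : Fin k → R} (hα : ∀ i, IsUnit (α i)) (β : Fin k → R) :
    IsUnit (upperBidiagonal α β).det := by
  rw [det_upperBidiagonal, IsUnit.prod_univ_iff]
  exact hα

end Bidiagonal

variable {R : Type*} [CommRing R] {ι n : Type*} [Fintype ι] [Fintype n]

theorem add_smul_vecMulVec_single_mulVec [DecidableEq ι] (N : Matrix n n R) (Q : Matrix n ι R)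
    (C : Matrix ι ι R) (c : R) (w : n → R) (j : ι) (z : ι → R) :
    (N * Q * C + c • vecMulVec w (Pi.single j 1)) *ᵥ z = N *ᵥ (Q *ᵥ (C *ᵥ z)) + (z j * c) • w := by
  rw [add_mulVec, smul_mulVec, vecMulVec_mulVec, op_smul_eq_smul, single_one_dotProduct,
    smul_smul, mul_comm c, mulVec_mulVec, mulVec_mulVec]

theorem mulVec_dotProduct_inv_mulVec_mulVec [DecidableEq n] {N : Matrix n n R}
    (hN : IsUnit N.det) (q : n → R) : (N *ᵥ q) ⬝ᵥ N⁻¹ *ᵥ (N *ᵥ q) = q ⬝ᵥ N *ᵥ q := by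
  rw [mulVec_mulVec, nonsing_inv_mul _ hN, one_mulVec, dotProduct_comm]

end Matrix

/-- Constraint residual of the GKB iterate: under the partial bidiagonalization
relations `Aᵀ V_k = N Q_k B_kᵀ + β_{k+1} N q_{k+1} e_kᵀ`, the iterate `u_k = V_k z_k`
with `z_k = β₁ B_k⁻ᵀ e₁` satisfies `Aᵀ u_k − b = ζ_k β_{k+1} N q_{k+1}`, whose
`N⁻¹`-norm is `|ζ_k| β_{k+1}`. -/
theorem stmt11 {m n k : ℕ} (hk : 0 < k)
    (N : Matrix (Fin n) (Fin n) ℝ) (hN : N.PosDef)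
    (A : Matrix (Fin m) (Fin n) ℝ)
    (b : Fin n → ℝ) (hb : b ≠ 0)
    (β₁ : ℝ) (hβ : β₁ = Real.sqrt (b ⬝ᵥ N⁻¹ *ᵥ b))
    (q₁ : Fin n → ℝ) (hq : q₁ = β₁⁻¹ • (N⁻¹ *ᵥ b))
    (V : Matrix (Fin m) (Fin k) ℝ) (Q : Matrix (Fin n) (Fin k) ℝ)
    (hcol : ∀ i, Q i ⟨0, hk⟩ = q₁ i)
    (α β : Fin k → ℝ) (hα : ∀ i, α i ≠ 0)
    (B : Matrix (Fin k) (Fin k) ℝ)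
    (hB : B = Matrix.of fun i j =>
      if j = i then α i else if (j : ℕ) = (i : ℕ) + 1 then β j else 0)
    (βk1 : ℝ) (hβk1 : 0 ≤ βk1)
    (qk1 : Fin n → ℝ) (hqk1 : qk1 ⬝ᵥ N *ᵥ qk1 = 1)
    (hrel : Aᵀ * V = N * Q * Bᵀ +
      βk1 • Matrix.vecMulVec (N *ᵥ qk1)
        (Pi.single (⟨k - 1, by omega⟩ : Fin k) (1 : ℝ) : Fin k → ℝ))
    (z : Fin k → ℝ)
    (hz : z = β₁ • (Bᵀ)⁻¹ *ᵥ (Pi.single (⟨0, hk⟩ : Fin k) (1 : ℝ) : Fin k → ℝ))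
    (uk : Fin m → ℝ) (huk : uk = V *ᵥ z) :
    Aᵀ *ᵥ uk - b = (z ⟨k - 1, by omega⟩ * βk1) • (N *ᵥ qk1) ∧
    Real.sqrt ((Aᵀ *ᵥ uk - b) ⬝ᵥ N⁻¹ *ᵥ (Aᵀ *ᵥ uk - b)) = |z ⟨k - 1, by omega⟩| * βk1 := by
  have hNdet : IsUnit N.det := (isUnit_iff_isUnit_det N).mp hN.isUnit
  have hβ₁ : β₁ ≠ 0 := by
    rw [hβ]
    exact (Real.sqrt_pos.mpr (by simpa using hN.inv.dotProduct_mulVec_pos hb)).ne'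
  have hBdet : IsUnit (Bᵀ).det := by
    rw [det_transpose, hB]
    exact isUnit_det_upperBidiagonal (fun i => (hα i).isUnit) β
  have hBz : Bᵀ *ᵥ z = β₁ • Pi.single ⟨0, hk⟩ 1 := by
    rw [hz, mulVec_smul, mulVec_mulVec, mul_nonsing_inv _ hBdet, one_mulVec]
  have hb_eq : N *ᵥ (Q *ᵥ (Bᵀ *ᵥ z)) = b := by
    have hQcol : Q.col ⟨0, hk⟩ = q₁ := funext hcol
    rw [hBz, mulVec_smul, mulVec_single_one, hQcol, hq, smul_smul, mul_inv_cancel₀ hβ₁,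
      one_smul, mulVec_mulVec, mul_nonsing_inv _ hNdet, one_mulVec]
  have hres : Aᵀ *ᵥ uk - b = (z ⟨k - 1, by omega⟩ * βk1) • (N *ᵥ qk1) := by
    rw [huk, mulVec_mulVec, hrel, add_smul_vecMulVec_single_mulVec, hb_eq, add_sub_cancel_left]
  refine ⟨hres, ?_⟩
  rw [hres, mulVec_smul, smul_dotProduct, dotProduct_smul,
    mulVec_dotProduct_inv_mulVec_mulVec hNdet, hqk1, smul_eq_mul, smul_eq_mul, mul_one,
    Real.sqrt_mul_self_eq_abs, abs_mul, abs_of_nonneg hβk1]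
end
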